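/- Let m ≥ 1, let γ_m denote the standard Gaussian measure on ℝ^m, and fix μ ∈ ℝ^m, a matrix C ∈ ℝ^{m×m}, a vector w ∈ ℝ^m, and a threshold f* ∈ ℝ. Set Δ = wᵀμ − f* and σ = ‖Cᵀw‖ (the Euclidean norm of Cᵀw), and assume σ > 0. Then ∫ max(wᵀ(μ + C z) − f*, 0) dγ_m(z) = Δ·Φ(Δ/σ) + σ·φ(Δ/σ). (This is Proposition 2 of the paper: the expected improvement for composite functions admits a closed form when the outer function g(y) = wᵀy is linear.) -/

import Mathlib

open MeasureTheory ProbabilityTheory Matrix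

/-- The standard Gaussian measure on `ℝ^m`, i.e. the `m`-fold product of `N(0,1)`. -/
noncomputable def stdGaussianE (m : ℕ) : Measure (EuclideanSpace ℝ (Fin m)) :=
  (Measure.pi fun _ : Fin m => gaussianReal 0 1).map (MeasurableEquiv.toLp 2 (Fin m → ℝ))

/-- The standard normal probability density function `φ`. -/
noncomputable def stdNormalPDF (x : ℝ) : ℝ :=
  (Real.sqrt (2 * Real.pi))⁻¹ * Real.exp (-x ^ 2 / 2)

/-- The standard normal cumulative distribution function `Φ`. -/
noncomputable def stdNormalCDF (x : ℝ) : ℝ :=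
  ((gaussianReal 0 1) (Set.Iic x)).toReal

open Real Set Filter Topology
open scoped NNReal RealInnerProductSpace

/-!
Writing `v = Cᵀw`, the integrand is `max (Δ + ⟪v, z⟫) 0`, and under the standard Gaussian the
linear functional `⟪v, ·⟫` has law `N(0, ‖v‖²)`, i.e. it is distributed as `-σX` with
`X ~ N(0,1)`. The positive part of `Δ - σX` is `Δ - σX` on the event `X ≤ Δ/σ`, of probability
`Φ(Δ/σ)`, and zero elsewhere; since `φ' = -xφ`, integrating `x φ(x)` up to `Δ/σ` gives
`-φ(Δ/σ)`.
-/

lemma gaussianPDFReal_zero_one : gaussianPDFReal 0 1 = stdNormalPDF := by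
  ext x
  simp [gaussianPDFReal, stdNormalPDF]

lemma hasDerivAt_stdNormalPDF (x : ℝ) : HasDerivAt stdNormalPDF (-(x * stdNormalPDF x)) x := by
  have hq : HasDerivAt (fun y : ℝ => -y ^ 2 / 2) (-x) x :=
    ((hasDerivAt_pow 2 x).fun_neg.div_const 2).congr_deriv (by norm_num; ring)
  exact (hq.exp.const_mul _).congr_deriv (by simp only [stdNormalPDF]; ring)

lemma tendsto_stdNormalPDF_atBot : Tendsto stdNormalPDF atBot (𝓝 0) := by
  have hsq : Tendsto (fun x : ℝ => x ^ 2) atBot atTop := by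
    simpa [Function.comp_def] using
      (tendsto_pow_atTop (α := ℝ) two_ne_zero).comp tendsto_neg_atBot_atTop
  have h := (tendsto_exp_atBot.comp
    ((tendsto_neg_atTop_atBot.comp hsq).atBot_div_const two_pos)).const_mul (√(2 * π))⁻¹
  rwa [mul_zero] at h

lemma integrable_mul_stdNormalPDF : Integrable fun x => x * stdNormalPDF x := by
  convert (integrable_mul_exp_neg_mul_sq (by norm_num : (0 : ℝ) < 1 / 2)).const_mul (√(2 * π))⁻¹
    using 2 with x
  simp only [stdNormalPDF]
  ring_nf

lemma setIntegral_Iic_mul_stdNormalPDF (a : ℝ) :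
    ∫ x in Iic a, x * stdNormalPDF x = -stdNormalPDF a := by
  have h := integral_Iic_of_hasDerivAt_of_tendsto (f := fun x => -stdNormalPDF x)
    (hasDerivAt_stdNormalPDF a).continuousAt.neg.continuousWithinAt
    (fun x _ => (hasDerivAt_stdNormalPDF x).neg)
    (by simpa using integrable_mul_stdNormalPDF.integrableOn)
    (by simpa using tendsto_stdNormalPDF_atBot.neg)
  simpa using h

lemma setIntegral_Iic_id_gaussianReal (a : ℝ) :
    ∫ x in Iic a, x ∂gaussianReal 0 1 = -stdNormalPDF a := by
  rw [← integral_indicator measurableSet_Iic, integral_gaussianReal_eq_integral_smul one_ne_zero,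
    gaussianPDFReal_zero_one, ← setIntegral_Iic_mul_stdNormalPDF,
    ← integral_indicator measurableSet_Iic]
  congr 1 with x
  by_cases hx : x ∈ Iic a <;> simp [hx, mul_comm]

lemma integral_max_sub_mul_gaussianReal (Δ : ℝ) {σ : ℝ} (hσ : 0 < σ) :
    ∫ x, max (Δ - σ * x) 0 ∂gaussianReal 0 1
      = Δ * stdNormalCDF (Δ / σ) + σ * stdNormalPDF (Δ / σ) := by
  have hmax : (fun x => max (Δ - σ * x) 0) = (Iic (Δ / σ)).indicator fun x => Δ - σ * x := by
    ext x
    simp only [indicator, mem_Iic]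
    split_ifs with hx
    · exact max_eq_left (by nlinarith [(le_div_iff₀' hσ).1 hx])
    · exact max_eq_right (by nlinarith [(div_lt_iff₀' hσ).1 (not_le.1 hx)])
  rw [hmax, integral_indicator measurableSet_Iic, integral_sub (integrable_const Δ)
    (IsGaussian.integrable_fun_id.const_mul σ).integrableOn, integral_const, integral_const_mul,
    setIntegral_Iic_id_gaussianReal, stdNormalCDF, measureReal_restrict_apply_univ, smul_eq_mul,
    measureReal_def]
  ring

lemma integral_max_add_gaussianReal (Δ : ℝ) {v : ℝ≥0} (hv : v ≠ 0) :
    ∫ t, max (Δ + t) 0 ∂gaussianReal 0 v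
      = Δ * stdNormalCDF (Δ / √v) + √v * stdNormalPDF (Δ / √v) := by
  have hmap : (gaussianReal 0 1).map (fun x => -√v * x) = gaussianReal 0 v := by
    rw [gaussianReal_map_const_mul, mul_zero, mul_one]
    congr
    simp
  rw [← hmap, integral_map (by fun_prop) (by fun_prop)]
  simp_rw [neg_mul, ← sub_eq_add_neg]
  exact integral_max_sub_mul_gaussianReal Δ (by positivity)

lemma stdGaussianE_eq_stdGaussian (m : ℕ) :
    stdGaussianE m = stdGaussian (EuclideanSpace ℝ (Fin m)) :=
  map_pi_eq_stdGaussian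

lemma stdGaussian_map_inner {E : Type*} [NormedAddCommGroup E] [InnerProductSpace ℝ E]
    [FiniteDimensional ℝ E] [MeasurableSpace E] [BorelSpace E] (v : E) :
    (stdGaussian E).map (fun z => ⟪v, z⟫) = gaussianReal 0 (‖v‖₊ ^ 2) := by
  have h := IsGaussian.map_eq_gaussianReal (μ := stdGaussian E) (innerSL ℝ v)
  rw [integral_strongDual_stdGaussian, variance_dual_stdGaussian, innerSL_apply_norm] at h
  convert h using 2
  · ext; simp
  · rw [← coe_nnnorm, ← NNReal.coe_pow, Real.toNNReal_coe]

lemma inner_toEuclideanLin {m n : Type*} [Fintype m] [Fintype n] [DecidableEq m] [DecidableEq n]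
    (C : Matrix m n ℝ) (w : EuclideanSpace ℝ m) (z : EuclideanSpace ℝ n) :
    ⟪w, C.toEuclideanLin z⟫ = ⟪Cᵀ.toEuclideanLin w, z⟫ := by
  rw [← conjTranspose_eq_transpose_of_trivial, toEuclideanLin_conjTranspose_eq_adjoint,
    LinearMap.adjoint_inner_left]

theorem eicf_closed_form_linear_general (m : ℕ)
    (μ : EuclideanSpace ℝ (Fin m)) (C : Matrix (Fin m) (Fin m) ℝ)
    (w : EuclideanSpace ℝ (Fin m)) (fstar : ℝ)
    (Δ σ : ℝ)
    (hΔ : Δ = inner ℝ w μ - fstar)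
    (hσ : σ = ‖Matrix.toEuclideanLin Cᵀ w‖)
    (hσpos : 0 < σ) :
    ∫ z, max (inner ℝ w (μ + Matrix.toEuclideanLin C z) - fstar) 0 ∂ stdGaussianE m
      = Δ * stdNormalCDF (Δ / σ) + σ * stdNormalPDF (Δ / σ) := by
  set v := Matrix.toEuclideanLin Cᵀ w
  have hv : ‖v‖₊ ^ 2 ≠ 0 := by
    rw [← NNReal.coe_ne_zero, NNReal.coe_pow, coe_nnnorm, ← hσ]
    positivity
  calc ∫ z, max (inner ℝ w (μ + Matrix.toEuclideanLin C z) - fstar) 0 ∂ stdGaussianE m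
      = ∫ z, max (Δ + ⟪v, z⟫) 0 ∂stdGaussian (EuclideanSpace ℝ (Fin m)) := by
        rw [stdGaussianE_eq_stdGaussian]
        congr 1 with z
        rw [inner_add_right, inner_toEuclideanLin, hΔ, add_sub_right_comm]
    _ = ∫ t, max (Δ + t) 0 ∂gaussianReal 0 (‖v‖₊ ^ 2) := by
        rw [← stdGaussian_map_inner, integral_map (by fun_prop) (by fun_prop)]
    _ = Δ * stdNormalCDF (Δ / σ) + σ * stdNormalPDF (Δ / σ) := by
        rw [integral_max_add_gaussianReal Δ hv, NNReal.coe_pow, coe_nnnorm,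
          sqrt_sq (norm_nonneg v), hσ]

/-- Proposition 2 of the paper: when the outer function `g(y) = wᵀy` is linear, the expected
improvement for composite functions admits the closed form
`Δ·Φ(Δ/σ) + σ·φ(Δ/σ)` with `Δ = wᵀμ − f*` and `σ = ‖Cᵀw‖`. -/
theorem eicf_closed_form_linear (m : ℕ) (hm : 1 ≤ m)
    (μ : EuclideanSpace ℝ (Fin m)) (C : Matrix (Fin m) (Fin m) ℝ)
    (w : EuclideanSpace ℝ (Fin m)) (fstar : ℝ)
    (Δ σ : ℝ)
    (hΔ : Δ = inner ℝ w μ - fstar)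
    (hσ : σ = ‖Matrix.toEuclideanLin Cᵀ w‖)
    (hσpos : 0 < σ) :
    ∫ z, max (inner ℝ w (μ + Matrix.toEuclideanLin C z) - fstar) 0 ∂ stdGaussianE m
      = Δ * stdNormalCDF (Δ / σ) + σ * stdNormalPDF (Δ / σ) :=
  eicf_closed_form_linear_general m μ C w fstar Δ σ hΔ hσ hσpos
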